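/- arXiv:2510.22120 — 2 statements merged into one kernel-verified Lean document; each statement's English description precedes it below -/
import Mathlib

section
/- Andréief's identity: for integrable functions f₁,…,fₙ and g₁,…,gₙ on ℝ (with all products fᵢgⱼ integrable), ∫_{ℝⁿ} det[fᵢ(xⱼ)]_{i,j=1}^n · det[gₖ(xⱼ)]_{k,j=1}^n dx₁⋯dxₙ = n! · det[∫_ℝ fᵢ(x) gⱼ(x) dx]_{i,j=1}^n. -/
open MeasureTheory Matrix

/-- Andréief's identity:
`∫_{ℝⁿ} det[fᵢ(xⱼ)] det[gₖ(xⱼ)] dx = n! · det[∫ fᵢ g_j]`. -/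
theorem andreief_identity (n : ℕ) (f g : Fin n → ℝ → ℝ)
    (hmf : ∀ i, Measurable (f i)) (hmg : ∀ i, Measurable (g i))
    (hint : ∀ i j, Integrable (fun x : ℝ => f i x * g j x)) :
    (∫ x : Fin n → ℝ,
        (Matrix.of fun i j : Fin n => f i (x j)).det
          * (Matrix.of fun k j : Fin n => g k (x j)).det)
      = (n.factorial : ℝ)
        * (Matrix.of fun i j : Fin n => ∫ x : ℝ, f i x * g j x).det := by
  classical
  set M : Matrix (Fin n) (Fin n) ℝ := Matrix.of fun i j => ∫ x : ℝ, f i x * g j x with hM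
  set c : Equiv.Perm (Fin n) → ℝ := fun σ => ((Equiv.Perm.sign σ : ℤ) : ℝ) with hc
  have hcsq : ∀ σ, c σ * c σ = 1 := by
    intro σ
    rcases Int.units_eq_one_or (Equiv.Perm.sign σ) with h | h <;> simp [hc, h]
  have h1 : ∀ x : Fin n → ℝ,
      (Matrix.of fun i j : Fin n => f i (x j)).det
        * (Matrix.of fun k j : Fin n => g k (x j)).det
      = ∑ σ : Equiv.Perm (Fin n), ∑ τ : Equiv.Perm (Fin n),
          c σ * c τ * ∏ j, (f (σ j) (x j) * g (τ j) (x j)) := by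
    intro x
    rw [Matrix.det_apply', Matrix.det_apply', Finset.sum_mul_sum]
    refine Finset.sum_congr rfl fun σ _ => Finset.sum_congr rfl fun τ _ => ?_
    simp only [Matrix.of_apply, Finset.prod_mul_distrib, hc]
    ring
  simp only [h1]
  have hintst : ∀ σ τ : Equiv.Perm (Fin n),
      Integrable (fun x : Fin n → ℝ =>
        c σ * c τ * ∏ j, (f (σ j) (x j) * g (τ j) (x j))) := by
    intro σ τ
    exact (Integrable.fintype_prod (f := fun j y => f (σ j) y * g (τ j) y)
      (fun j => hint (σ j) (τ j))).const_mul _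
  rw [integral_finset_sum _ (fun σ _ => integrable_finset_sum _ fun τ _ => hintst σ τ)]
  have h2 : ∀ σ : Equiv.Perm (Fin n),
      (∫ x : Fin n → ℝ, ∑ τ : Equiv.Perm (Fin n),
          c σ * c τ * ∏ j, (f (σ j) (x j) * g (τ j) (x j)))
        = ∑ τ : Equiv.Perm (Fin n), c σ * c τ * ∏ j, M (σ j) (τ j) := by
    intro σ
    rw [integral_finset_sum _ (fun τ _ => hintst σ τ)]
    refine Finset.sum_congr rfl fun τ _ => ?_
    rw [MeasureTheory.integral_const_mul,
      MeasureTheory.volume_pi, MeasureTheory.integral_fintype_prod_eq_prod (f := fun j y => f (σ j) y * g (τ j) y)]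
    rfl
  simp only [h2]
  -- algebraic part
  have key : ∀ σ : Equiv.Perm (Fin n),
      (∑ τ : Equiv.Perm (Fin n), c σ * c τ * ∏ j, M (σ j) (τ j)) = M.det := by
    intro σ
    rw [← Equiv.sum_comp (Equiv.mulRight σ)
      (fun τ => c σ * c τ * ∏ j, M (σ j) (τ j))]
    have : ∀ τ : Equiv.Perm (Fin n),
        c σ * c (τ * σ) * ∏ j, M (σ j) ((τ * σ) j) = c τ * ∏ j, M j (τ j) := by
      intro τ
      have hprod : ∏ j, M (σ j) ((τ * σ) j) = ∏ j, M j (τ j) := by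
        rw [← Equiv.prod_comp σ (fun j => M j (τ j))]
        rfl
      have hsign : c σ * c (τ * σ) = c τ := by
        simp only [hc, Equiv.Perm.sign_mul, Units.val_mul, Int.cast_mul]
        rcases Int.units_eq_one_or (Equiv.Perm.sign σ) with h | h <;>
          rcases Int.units_eq_one_or (Equiv.Perm.sign τ) with h' | h' <;> simp [h, h']
      rw [hprod, hsign]
    simp only [Equiv.coe_mulRight, this]
    rw [← Matrix.det_transpose M, Matrix.det_apply']
    rfl
  simp only [key, Finset.sum_const, Finset.card_univ, Fintype.card_perm, Fintype.card_fin,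
    nsmul_eq_mul]
end

section
/- For t ∈ (0,1), σ² := t(1−t), and real vectors a = (a₁,…,aₙ), b = (b₁,…,bₙ), the integral I = ∫_{ℝⁿ} exp(−Σⱼ λⱼ²/(2σ²)) · det[e^{aᵢλⱼ/t}] · det[e^{bₖλⱼ/(1−t)}] dλ equals n! (2πσ²)^{n/2} exp(((1−t)/(2t)) Σᵢ aᵢ² + (t/(2(1−t))) Σⱼ bⱼ²) · det[e^{aᵢbⱼ}]_{i,j=1}^n. -/
open MeasureTheory Matrix Finset

lemma gauss_integrable_aux {s : ℝ} (hs : 0 < s) (c : ℝ) :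
    Integrable (fun x : ℝ => Real.exp (-x ^ 2 / (2 * s) + c * x)) := by
  have h : ∀ x : ℝ, Real.exp (-x ^ 2 / (2 * s) + c * x)
      = Real.exp (c ^ 2 * s / 2) * Real.exp (-(1 / (2 * s)) * (x - c * s) ^ 2) := by
    intro x
    rw [← Real.exp_add]
    congr 1
    field_simp
    ring
  simp_rw [h]
  exact ((integrable_exp_neg_mul_sq (by positivity : (0:ℝ) < 1 / (2 * s))).comp_sub_right
    (c * s)).const_mul _

lemma gauss_integral_aux {s : ℝ} (hs : 0 < s) (c : ℝ) :
    ∫ x : ℝ, Real.exp (-x ^ 2 / (2 * s) + c * x)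
      = Real.sqrt (2 * Real.pi * s) * Real.exp (c ^ 2 * s / 2) := by
  have h : ∀ x : ℝ, Real.exp (-x ^ 2 / (2 * s) + c * x)
      = Real.exp (c ^ 2 * s / 2) * Real.exp (-(1 / (2 * s)) * (x - c * s) ^ 2) := by
    intro x
    rw [← Real.exp_add]
    congr 1
    field_simp
    ring
  simp_rw [h]
  rw [integral_const_mul,
    integral_sub_right_eq_self (fun x => Real.exp (-(1 / (2 * s)) * x ^ 2)) (c * s),
    integral_gaussian]
  rw [mul_comm]
  congr 1
  congr 1
  field_simp

lemma perm_double_sum_aux (n : ℕ) (a b : Fin n → ℝ) :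
    ∑ σ : Equiv.Perm (Fin n), ∑ τ : Equiv.Perm (Fin n),
      ((Equiv.Perm.sign σ : ℤ) : ℝ) * ((Equiv.Perm.sign τ : ℤ) : ℝ)
        * Real.exp (∑ j, a (σ j) * b (τ j))
    = (n.factorial : ℝ) * (Matrix.of fun i j : Fin n => Real.exp (a i * b j)).det := by
  have hdet : (Matrix.of fun i j : Fin n => Real.exp (a i * b j)).det
      = ∑ π : Equiv.Perm (Fin n),
          ((Equiv.Perm.sign π : ℤ) : ℝ) * Real.exp (∑ k, a (π k) * b k) := by
    rw [Matrix.det_apply']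
    refine Finset.sum_congr rfl fun π _ => ?_
    rw [Real.exp_sum]
    rfl
  rw [Finset.sum_comm]
  have key : ∀ τ : Equiv.Perm (Fin n),
      ∑ σ : Equiv.Perm (Fin n), ((Equiv.Perm.sign σ : ℤ) : ℝ) * ((Equiv.Perm.sign τ : ℤ) : ℝ)
        * Real.exp (∑ j, a (σ j) * b (τ j))
      = (Matrix.of fun i j : Fin n => Real.exp (a i * b j)).det := by
    intro τ
    rw [hdet]
    rw [← Equiv.sum_comp (Equiv.mulRight τ)
      (fun σ : Equiv.Perm (Fin n) => ((Equiv.Perm.sign σ : ℤ) : ℝ)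
        * ((Equiv.Perm.sign τ : ℤ) : ℝ) * Real.exp (∑ j, a (σ j) * b (τ j)))]
    refine Finset.sum_congr rfl fun π _ => ?_
    have hsq : ((Equiv.Perm.sign τ : ℤ) : ℝ) * ((Equiv.Perm.sign τ : ℤ) : ℝ) = 1 := by
      rcases Int.units_eq_one_or (Equiv.Perm.sign τ) with h | h <;> rw [h] <;> norm_num
    have hsgn : ((Equiv.Perm.sign (π * τ) : ℤ) : ℝ)
        = ((Equiv.Perm.sign π : ℤ) : ℝ) * ((Equiv.Perm.sign τ : ℤ) : ℝ) := by
      rw [Equiv.Perm.sign_mul]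
      push_cast
      ring
    have hsum : (∑ j, a ((π * τ) j) * b (τ j)) = ∑ k, a (π k) * b k := by
      have := Equiv.sum_comp τ (fun k => a (π k) * b k)
      simpa [Equiv.Perm.mul_apply] using this
    simp only [Equiv.coe_mulRight, hsgn, hsum]
    calc ((Equiv.Perm.sign π : ℤ) : ℝ) * ((Equiv.Perm.sign τ : ℤ) : ℝ)
          * ((Equiv.Perm.sign τ : ℤ) : ℝ) * Real.exp (∑ k, a (π k) * b k)
        = ((Equiv.Perm.sign π : ℤ) : ℝ)
            * (((Equiv.Perm.sign τ : ℤ) : ℝ) * ((Equiv.Perm.sign τ : ℤ) : ℝ))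
            * Real.exp (∑ k, a (π k) * b k) := by ring
      _ = ((Equiv.Perm.sign π : ℤ) : ℝ) * Real.exp (∑ k, a (π k) * b k) := by
          rw [hsq]; ring
  rw [Finset.sum_congr rfl fun τ _ => key τ, Finset.sum_const, Finset.card_univ, Fintype.card_perm]
  simp [nsmul_eq_mul]

/-- Single-HCIZ collapse at the eigenvalue level: with `σ² = t(1−t)`,
`∫_{ℝⁿ} exp(−Σλⱼ²/(2σ²)) det[e^{aᵢλⱼ/t}] det[e^{bₖλⱼ/(1−t)}] dλ
  = n! (2πσ²)^{n/2} exp(((1−t)/(2t))Σaᵢ² + (t/(2(1−t)))Σbⱼ²) det[e^{aᵢbⱼ}]`. -/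
theorem km_partition_collapse (n : ℕ) (t : ℝ) (ht : t ∈ Set.Ioo (0 : ℝ) 1)
    (a b : Fin n → ℝ) :
    (∫ lam : Fin n → ℝ,
        Real.exp (-(∑ j, (lam j) ^ 2) / (2 * (t * (1 - t))))
          * (Matrix.of fun i j : Fin n => Real.exp (a i * lam j / t)).det
          * (Matrix.of fun k j : Fin n => Real.exp (b k * lam j / (1 - t))).det)
      = (n.factorial : ℝ) * (2 * Real.pi * (t * (1 - t))) ^ ((n : ℝ) / 2)
        * Real.exp (((1 - t) / (2 * t)) * ∑ i, (a i) ^ 2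
            + (t / (2 * (1 - t))) * ∑ j, (b j) ^ 2)
        * (Matrix.of fun i j : Fin n => Real.exp (a i * b j)).det := by
  obtain ⟨ht0, ht1'⟩ := ht
  have ht1 : 0 < 1 - t := by linarith
  set s : ℝ := t * (1 - t) with hs_def
  have hs : 0 < s := mul_pos ht0 ht1
  -- coefficient function
  set c : Equiv.Perm (Fin n) → Equiv.Perm (Fin n) → Fin n → ℝ :=
    fun σ τ j => a (σ j) / t + b (τ j) / (1 - t) with hc_def
  -- the summand
  have hE : ∀ lam : Fin n → ℝ,
      Real.exp (-(∑ j, (lam j) ^ 2) / (2 * s)) = ∏ j, Real.exp (-(lam j) ^ 2 / (2 * s)) := by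
    intro lam
    rw [← Real.exp_sum]
    congr 1
    rw [← Finset.sum_div]
    congr 1
    exact (Finset.sum_neg_distrib _).symm
  have expand : ∀ lam : Fin n → ℝ,
      Real.exp (-(∑ j, (lam j) ^ 2) / (2 * s))
          * (Matrix.of fun i j : Fin n => Real.exp (a i * lam j / t)).det
          * (Matrix.of fun k j : Fin n => Real.exp (b k * lam j / (1 - t))).det
      = ∑ σ : Equiv.Perm (Fin n), ∑ τ : Equiv.Perm (Fin n),
          ((Equiv.Perm.sign σ : ℤ) : ℝ) * ((Equiv.Perm.sign τ : ℤ) : ℝ)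
            * ∏ j, Real.exp (-(lam j) ^ 2 / (2 * s) + c σ τ j * lam j) := by
    intro lam
    rw [Matrix.det_apply', Matrix.det_apply', Finset.mul_sum, Finset.sum_comm]
    refine Finset.sum_congr rfl fun τ _ => ?_
    rw [Finset.mul_sum, Finset.sum_mul]
    refine Finset.sum_congr rfl fun σ _ => ?_
    calc Real.exp (-(∑ j, (lam j) ^ 2) / (2 * s))
          * (((Equiv.Perm.sign σ : ℤ) : ℝ)
            * ∏ j, (Matrix.of fun i j : Fin n => Real.exp (a i * lam j / t)) (σ j) j)
          * (((Equiv.Perm.sign τ : ℤ) : ℝ)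
            * ∏ j, (Matrix.of fun k j : Fin n => Real.exp (b k * lam j / (1 - t))) (τ j) j)
        = ((Equiv.Perm.sign σ : ℤ) : ℝ) * ((Equiv.Perm.sign τ : ℤ) : ℝ)
            * ((∏ j, Real.exp (-(lam j) ^ 2 / (2 * s)))
              * (∏ j, Real.exp (a (σ j) * lam j / t))
              * (∏ j, Real.exp (b (τ j) * lam j / (1 - t)))) := by
          rw [hE]
          simp only [Matrix.of_apply]
          ring
      _ = ((Equiv.Perm.sign σ : ℤ) : ℝ) * ((Equiv.Perm.sign τ : ℤ) : ℝ)
            * ∏ j, Real.exp (-(lam j) ^ 2 / (2 * s) + c σ τ j * lam j) := by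
          rw [← Finset.prod_mul_distrib, ← Finset.prod_mul_distrib]
          congr 1
          refine Finset.prod_congr rfl fun j _ => ?_
          rw [← Real.exp_add, ← Real.exp_add]
          congr 1
          simp only [hc_def]
          ring
  -- integrability of each term
  have hInt : ∀ (σ τ : Equiv.Perm (Fin n)),
      Integrable (fun lam : Fin n → ℝ =>
        ((Equiv.Perm.sign σ : ℤ) : ℝ) * ((Equiv.Perm.sign τ : ℤ) : ℝ)
          * ∏ j, Real.exp (-(lam j) ^ 2 / (2 * s) + c σ τ j * lam j)) := by
    intro σ τ
    exact (Integrable.fintype_prod (f := fun j x => Real.exp (-x ^ 2 / (2 * s) + c σ τ j * x))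
      (fun j => gauss_integrable_aux hs (c σ τ j))).const_mul _
  -- swap sum and integral
  rw [show (∫ lam : Fin n → ℝ,
        Real.exp (-(∑ j, (lam j) ^ 2) / (2 * s))
          * (Matrix.of fun i j : Fin n => Real.exp (a i * lam j / t)).det
          * (Matrix.of fun k j : Fin n => Real.exp (b k * lam j / (1 - t))).det)
      = ∫ lam : Fin n → ℝ, ∑ σ : Equiv.Perm (Fin n), ∑ τ : Equiv.Perm (Fin n),
          ((Equiv.Perm.sign σ : ℤ) : ℝ) * ((Equiv.Perm.sign τ : ℤ) : ℝ)
            * ∏ j, Real.exp (-(lam j) ^ 2 / (2 * s) + c σ τ j * lam j)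
      from integral_congr_ae (Filter.Eventually.of_forall expand)]
  rw [integral_finset_sum _ fun σ _ => integrable_finset_sum _ fun τ _ => hInt σ τ]
  have hterm : ∀ (σ τ : Equiv.Perm (Fin n)),
      (∫ lam : Fin n → ℝ,
        ((Equiv.Perm.sign σ : ℤ) : ℝ) * ((Equiv.Perm.sign τ : ℤ) : ℝ)
          * ∏ j, Real.exp (-(lam j) ^ 2 / (2 * s) + c σ τ j * lam j))
      = ((Equiv.Perm.sign σ : ℤ) : ℝ) * ((Equiv.Perm.sign τ : ℤ) : ℝ)
          * Real.exp (∑ j, a (σ j) * b (τ j))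
          * ((2 * Real.pi * s) ^ ((n : ℝ) / 2)
            * Real.exp (((1 - t) / (2 * t)) * ∑ i, (a i) ^ 2
                + (t / (2 * (1 - t))) * ∑ j, (b j) ^ 2)) := by
    intro σ τ
    rw [integral_const_mul,
      integral_fintype_prod_volume_eq_prod
        (f := fun j x => Real.exp (-x ^ 2 / (2 * s) + c σ τ j * x))]
    have hprod : (∏ j, ∫ x : ℝ, Real.exp (-x ^ 2 / (2 * s) + c σ τ j * x))
        = Real.sqrt (2 * Real.pi * s) ^ n * Real.exp (∑ j, (c σ τ j) ^ 2 * s / 2) := by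
      rw [Finset.prod_congr rfl fun j _ => gauss_integral_aux hs (c σ τ j),
        Finset.prod_mul_distrib, Finset.prod_const, Finset.card_univ, Fintype.card_fin,
        ← Real.exp_sum]
    rw [hprod]
    have hcsum : (∑ j, (c σ τ j) ^ 2 * s / 2)
        = (((1 - t) / (2 * t)) * ∑ i, (a i) ^ 2 + (t / (2 * (1 - t))) * ∑ j, (b j) ^ 2)
          + ∑ j, a (σ j) * b (τ j) := by
      have hpt : ∀ j, (c σ τ j) ^ 2 * s / 2
          = ((1 - t) / (2 * t)) * (a (σ j)) ^ 2 + (t / (2 * (1 - t))) * (b (τ j)) ^ 2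
            + a (σ j) * b (τ j) := by
        intro j
        simp only [hc_def, hs_def]
        field_simp
        ring
      rw [Finset.sum_congr rfl fun j _ => hpt j]
      rw [Finset.sum_add_distrib, Finset.sum_add_distrib, ← Finset.mul_sum, ← Finset.mul_sum]
      rw [Equiv.sum_comp σ (fun i => (a i) ^ 2), Equiv.sum_comp τ (fun i => (b i) ^ 2)]
    rw [hcsum, Real.exp_add]
    have hpow : Real.sqrt (2 * Real.pi * s) ^ n = (2 * Real.pi * s) ^ ((n : ℝ) / 2) := by
      have hx : (0:ℝ) ≤ 2 * Real.pi * s := by positivity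
      rw [Real.sqrt_eq_rpow, ← Real.rpow_natCast ((2 * Real.pi * s) ^ ((1:ℝ)/2)) n,
        ← Real.rpow_mul hx]
      congr 1
      ring
    rw [hpow]
    ring
  rw [Finset.sum_congr rfl fun σ _ =>
    integral_finset_sum (μ := (volume : Measure (Fin n → ℝ))) _ fun τ _ => hInt σ τ]
  rw [Finset.sum_congr rfl fun σ _ => Finset.sum_congr rfl fun τ _ => hterm σ τ]
  rw [Finset.sum_congr rfl fun σ _ => (Finset.sum_mul _ _ _).symm, ← Finset.sum_mul,
    perm_double_sum_aux n a b]
  ring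
end
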